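/- arXiv:2112.12416 — 2 statements merged into one kernel-verified Lean document; each statement's English description precedes it below -/
import Mathlib

section
/- Let n be a positive natural number and let S be a subset of {0,1}^n. There exists a nonnegative vector z = (z_0, z_1, ..., z_n) ∈ ℝ^{n+1} with z_0 + z_1 + ... + z_n = 1 and z_0 + Σ_{i=1}^n z_i·(-1)^{b_i} = 0 for every b ∈ S, if and only if there exists a nonnegative vector w = (w_1, ..., w_n) ∈ ℝ^n with w_1 + ... + w_n ≤ 1 and Σ_{i : b_i = 1} w_i = 1/2 for every b ∈ S. -/
lemma aux_split (n : ℕ) (b : Fin n → Bool) (w : Fin n → ℝ) :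
    ∑ i : Fin n, w i * (if b i then -1 else 1)
      = ∑ i : Fin n, w i - 2 * ∑ i : Fin n, (if b i then w i else 0) := by
  rw [Finset.mul_sum, ← Finset.sum_sub_distrib]
  refine Finset.sum_congr rfl fun i _ => ?_
  by_cases h : b i <;> simp [h] <;> ring

theorem stmt_0 (n : ℕ) (hn : 0 < n) (S : Set (Fin n → Bool)) :
    (∃ z : Fin (n + 1) → ℝ, (∀ i, 0 ≤ z i) ∧ (∑ i, z i) = 1 ∧
      ∀ b ∈ S, z 0 + ∑ i : Fin n, z i.succ * (if b i then -1 else 1) = 0) ↔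
    (∃ w : Fin n → ℝ, (∀ i, 0 ≤ w i) ∧ (∑ i, w i) ≤ 1 ∧
      ∀ b ∈ S, (∑ i, if b i then w i else 0) = 1 / 2) := by
  constructor
  · rintro ⟨z, hz, hsum, hb⟩
    rw [Fin.sum_univ_succ] at hsum
    refine ⟨fun i => z i.succ, fun i => hz _, by linarith [hz 0], ?_⟩
    intro b hbS
    have h := hb b hbS
    rw [aux_split] at h
    linarith
  · rintro ⟨w, hw, hsum, hb⟩
    refine ⟨Fin.cases (1 - ∑ i, w i) w, ?_, ?_, ?_⟩
    · intro i
      induction i using Fin.cases with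
      | zero => simpa using by linarith
      | succ j => simpa using hw j
    · rw [Fin.sum_univ_succ]; simp
    · intro b hbS
      have h := hb b hbS
      simp only [Fin.cases_zero, Fin.cases_succ]
      rw [aux_split, h]
      ring
end

section
/- Let n ≥ 1 and let S ⊆ {0,1}^n contain at least one nonzero string. If there exists a nonnegative vector z = (z_0, ..., z_n) ∈ ℝ^{n+1} with z_0 + z_1 + ... + z_n = 1 and z_0 + Σ_{i=1}^n z_i·(-1)^{a_i} = 0 for all a ∈ S, then |S| ≤ 2^{n-1}. -/
theorem stmt_4 (n : ℕ) (hn : 1 ≤ n) (S : Set (Fin n → Bool))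
    (hne : ∃ a ∈ S, a ≠ fun _ => false)
    (hz : ∃ z : Fin (n + 1) → ℝ, (∀ i, 0 ≤ z i) ∧ (∑ i, z i) = 1 ∧
      ∀ a ∈ S, z 0 + ∑ i : Fin n, z i.succ * (if a i then -1 else 1) = 0) :
    S.ncard ≤ 2 ^ (n - 1) := by
  obtain ⟨z, hnn, hsum, hS⟩ := hz
  obtain ⟨a0, ha0S, ha0ne⟩ := hne
  -- some coordinate among z i.succ is nonzero
  have hex : ∃ i0 : Fin n, z i0.succ ≠ 0 := by
    by_contra h
    push_neg at h
    have h1 : z 0 + ∑ i : Fin n, z i.succ * (if a0 i then -1 else 1) = 0 := hS a0 ha0S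
    have h2 : ∑ i : Fin n, z i.succ * (if a0 i then -1 else 1) = 0 := by
      apply Finset.sum_eq_zero
      intro i _
      rw [h i]; ring
    have h3 : (∑ i, z i) = z 0 + ∑ i : Fin n, z i.succ := Fin.sum_univ_succ z
    have h4 : ∑ i : Fin n, z i.succ = 0 := Finset.sum_eq_zero fun i _ => h i
    rw [h3, h4] at hsum
    rw [h2] at h1
    linarith
  obtain ⟨i0, hi0⟩ := hex
  -- injection from S to functions on coordinates ≠ i0
  have hinj : Set.InjOn (fun (a : Fin n → Bool) => fun j : {i : Fin n // i ≠ i0} => a j) S := by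
    intro a haS b hbS hab
    have hrest : ∀ i : Fin n, i ≠ i0 → a i = b i := by
      intro i hi
      exact congrFun hab ⟨i, hi⟩
    have ha := hS a haS
    have hb := hS b hbS
    have hsa : ∑ i : Fin n, z i.succ * (if a i then -1 else 1) =
        ∑ i : Fin n, z i.succ * (if b i then -1 else 1) := by linarith
    have hsplit : ∀ c : Fin n → Bool,
        ∑ i : Fin n, z i.succ * (if c i then -1 else 1) =
          z i0.succ * (if c i0 then -1 else 1) +
            ∑ i ∈ Finset.univ.erase i0, z i.succ * (if c i then -1 else 1) := by
      intro c
      exact (Finset.add_sum_erase _ (fun i => z i.succ * if c i then -1 else 1)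
        (Finset.mem_univ i0)).symm
    rw [hsplit a, hsplit b] at hsa
    have hrest' : ∑ i ∈ Finset.univ.erase i0, z i.succ * (if a i then -1 else 1) =
        ∑ i ∈ Finset.univ.erase i0, z i.succ * (if b i then -1 else 1) := by
      apply Finset.sum_congr rfl
      intro i hi
      rw [hrest i (Finset.ne_of_mem_erase hi)]
    have hkey : z i0.succ * (if a i0 then -1 else 1) = z i0.succ * (if b i0 then -1 else 1) := by
      linarith
    have hval : (if a i0 then (-1 : ℝ) else 1) = (if b i0 then -1 else 1) :=
      mul_left_cancel₀ hi0 hkey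
    have hi0eq : a i0 = b i0 := by
      by_cases h1 : a i0 <;> by_cases h2 : b i0 <;> simp [h1, h2] at hval ⊢
      · norm_num at hval
      · norm_num at hval
    funext i
    by_cases hi : i = i0
    · rw [hi]; exact hi0eq
    · exact hrest i hi
  -- cardinality
  have hcard : S.ncard ≤ Nat.card ({i : Fin n // i ≠ i0} → Bool) := by
    have := Set.ncard_le_ncard_of_injOn
      (fun (a : Fin n → Bool) => fun j : {i : Fin n // i ≠ i0} => a j)
      (fun a _ => Set.mem_univ _) hinj (Set.finite_univ)
    rwa [Set.ncard_univ] at this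
  have : Nat.card ({i : Fin n // i ≠ i0} → Bool) = 2 ^ (n - 1) := by
    rw [Nat.card_eq_fintype_card, Fintype.card_fun, Fintype.card_bool]
    congr 1
    rw [Fintype.card_subtype_compl]
    simp
  omega
end
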